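/- arXiv:1707.02293 — 2 statements merged into one kernel-verified Lean document; each statement's English description precedes it below -/
import Mathlib

section
/- The distribution minimizing ρ·KL(p, p₀) + (1-ρ)·KL(p, p₁) over densities p, where p₀ and p₁ are fixed densities and ρ ∈ (0,1), is the normalized geometric mixture p*(x) ∝ p₀(x)^ρ p₁(x)^{1-ρ}. -/
/-! Pointwise, `ρ·f log(f/p₀) + (1-ρ)·f log(f/p₁) = f log(f/p*) - f log Z`, so for every density `f`
the objective equals `KL(f, p*) - log Z`. At `f = p*` it is `-log Z`, and elsewhere it is at least
that by Gibbs' inequality `KL(f, p*) ≥ 0`. -/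

open MeasureTheory Real

theorem sub_le_mul_log_div {a b : ℝ} (ha : 0 ≤ a) (hb : 0 < b) : a - b ≤ a * log (a / b) := by
  rcases ha.eq_or_lt with rfl | ha
  · simpa using hb.le
  · have h := one_sub_inv_le_log_of_pos (div_pos ha hb)
    rw [inv_div] at h
    calc a - b = a * (1 - b / a) := by field_simp
      _ ≤ a * log (a / b) := mul_le_mul_of_nonneg_left h ha.le

/-- Gibbs' inequality. -/
theorem integral_mul_log_div_nonneg {Ω : Type*} [MeasurableSpace Ω] {μ : Measure Ω}
    {p q : Ω → ℝ} (hp : ∀ x, 0 ≤ p x) (hq : ∀ x, 0 < q x)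
    (hp_int : Integrable p μ) (hq_int : Integrable q μ) (hpq : ∫ x, p x ∂μ = ∫ x, q x ∂μ) :
    0 ≤ ∫ x, p x * log (p x / q x) ∂μ := by
  by_cases hlog_int : Integrable (fun x => p x * log (p x / q x)) μ
  · calc (0 : ℝ) = ∫ x, (p x - q x) ∂μ := by rw [integral_sub hp_int hq_int, hpq, sub_self]
      _ ≤ ∫ x, p x * log (p x / q x) ∂μ :=
        integral_mono (hp_int.sub hq_int) hlog_int fun x => sub_le_mul_log_div (hp x) (hq x)
  · -- the Bochner integral of a non-integrable function is `0`
    rw [integral_undef hlog_int]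

theorem mul_log_div_geom_mixture {a u v ρ Z : ℝ} (ha : 0 ≤ a) (hu : 0 < u) (hv : 0 < v)
    (hZ : 0 < Z) :
    a * log (a / (u ^ ρ * v ^ (1 - ρ) / Z))
      = ρ * (a * log (a / u)) + (1 - ρ) * (a * log (a / v)) + log Z * a := by
  rcases ha.eq_or_lt with rfl | ha
  · simp
  · rw [log_div ha.ne' (by positivity), log_div ha.ne' hu.ne', log_div ha.ne' hv.ne',
      log_div (by positivity) hZ.ne', log_mul (by positivity) (by positivity),
      log_rpow hu, log_rpow hv]
    ring

theorem integral_mul_log_div_geom_mixture {Ω : Type*} [MeasurableSpace Ω] {μ : Measure Ω}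
    {ρ Z : ℝ} {p₀ p₁ q f : Ω → ℝ} (hp₀ : ∀ x, 0 < p₀ x) (hp₁ : ∀ x, 0 < p₁ x) (hZ : 0 < Z)
    (hq : ∀ x, q x = p₀ x ^ ρ * p₁ x ^ (1 - ρ) / Z) (hf : ∀ x, 0 ≤ f x)
    (hf_int : Integrable f μ)
    (hf₀ : Integrable (fun x => f x * log (f x / p₀ x)) μ)
    (hf₁ : Integrable (fun x => f x * log (f x / p₁ x)) μ) :
    ∫ x, f x * log (f x / q x) ∂μ
      = ρ * ∫ x, f x * log (f x / p₀ x) ∂μ + (1 - ρ) * ∫ x, f x * log (f x / p₁ x) ∂μ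
        + log Z * ∫ x, f x ∂μ := by
  have hpointwise : ∀ x, f x * log (f x / q x)
      = ρ * (f x * log (f x / p₀ x)) + (1 - ρ) * (f x * log (f x / p₁ x)) + log Z * f x :=
    fun x => hq x ▸ mul_log_div_geom_mixture (hf x) (hp₀ x) (hp₁ x) hZ
  simp_rw [hpointwise]
  rw [integral_add ((hf₀.const_mul ρ).fun_add (hf₁.const_mul (1 - ρ))) (hf_int.const_mul _),
    integral_add (hf₀.const_mul ρ) (hf₁.const_mul (1 - ρ)),
    integral_const_mul, integral_const_mul, integral_const_mul]

theorem geometric_mixture_minimizes_KL_combination_general {Ω : Type*} [MeasurableSpace Ω]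
    (μ : Measure Ω) (ρ : ℝ)
    (p₀ p₁ : Ω → ℝ) (hp₀ : ∀ x, 0 < p₀ x) (hp₁ : ∀ x, 0 < p₁ x)
    (Z : ℝ) (hZpos : 0 < Z)
    (hZ : ∫ x, p₀ x ^ ρ * p₁ x ^ (1 - ρ) ∂μ = Z)
    (pstar : Ω → ℝ) (hpstar : ∀ x, pstar x = p₀ x ^ ρ * p₁ x ^ (1 - ρ) / Z)
    (hstarint₀ : Integrable (fun x => pstar x * log (pstar x / p₀ x)) μ)
    (hstarint₁ : Integrable (fun x => pstar x * log (pstar x / p₁ x)) μ)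
    (p : Ω → ℝ) (hp : ∀ x, 0 ≤ p x) (hpnorm : ∫ x, p x ∂μ = 1)
    (hint₀ : Integrable (fun x => p x * log (p x / p₀ x)) μ)
    (hint₁ : Integrable (fun x => p x * log (p x / p₁ x)) μ) :
    ρ * ∫ x, pstar x * log (pstar x / p₀ x) ∂μ
        + (1 - ρ) * ∫ x, pstar x * log (pstar x / p₁ x) ∂μ
      ≤ ρ * ∫ x, p x * log (p x / p₀ x) ∂μ
        + (1 - ρ) * ∫ x, p x * log (p x / p₁ x) ∂μ := by
  have hstar_pos : ∀ x, 0 < pstar x := fun x => by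
    have := hp₀ x; have := hp₁ x; rw [hpstar x]; positivity
  have hstar_norm : ∫ x, pstar x ∂μ = 1 := by
    rw [funext hpstar, integral_div, hZ, div_self hZpos.ne']
  have hstar_int : Integrable pstar μ := .of_integral_ne_zero (by simp [hstar_norm])
  have hp_int : Integrable p μ := .of_integral_ne_zero (by simp [hpnorm])
  have hstar_val := integral_mul_log_div_geom_mixture hp₀ hp₁ hZpos hpstar
    (fun x => (hstar_pos x).le) hstar_int hstarint₀ hstarint₁
  have hp_val := integral_mul_log_div_geom_mixture hp₀ hp₁ hZpos hpstar hp hp_int hint₀ hint₁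
  have hgibbs := integral_mul_log_div_nonneg hp hstar_pos hp_int hstar_int
    (hpnorm.trans hstar_norm.symm)
  simp only [div_self (hstar_pos _).ne', log_one, mul_zero, integral_zero] at hstar_val
  rw [hstar_norm] at hstar_val
  rw [hpnorm] at hp_val
  linarith

/-- The distribution minimizing `ρ·KL(p, p₀) + (1-ρ)·KL(p, p₁)` over densities
`p`, where `p₀, p₁` are fixed densities and `ρ ∈ (0,1)`, is the normalized
geometric mixture `p*(x) ∝ p₀(x)^ρ p₁(x)^{1-ρ}`. -/
theorem geometric_mixture_minimizes_KL_combination {Ω : Type*} [MeasurableSpace Ω]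
    (μ : Measure Ω) (ρ : ℝ) (hρ : ρ ∈ Set.Ioo (0 : ℝ) 1)
    (p₀ p₁ : Ω → ℝ) (hp₀ : ∀ x, 0 < p₀ x) (hp₁ : ∀ x, 0 < p₁ x)
    (hp₀norm : ∫ x, p₀ x ∂μ = 1) (hp₁norm : ∫ x, p₁ x ∂μ = 1)
    (Z : ℝ) (hZpos : 0 < Z)
    (hZ : ∫ x, p₀ x ^ ρ * p₁ x ^ (1 - ρ) ∂μ = Z)
    (hZint : Integrable (fun x => p₀ x ^ ρ * p₁ x ^ (1 - ρ)) μ)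
    (pstar : Ω → ℝ) (hpstar : ∀ x, pstar x = p₀ x ^ ρ * p₁ x ^ (1 - ρ) / Z)
    (hstarint₀ : Integrable (fun x => pstar x * log (pstar x / p₀ x)) μ)
    (hstarint₁ : Integrable (fun x => pstar x * log (pstar x / p₁ x)) μ)
    (p : Ω → ℝ) (hp : ∀ x, 0 ≤ p x) (hpnorm : ∫ x, p x ∂μ = 1)
    (hint₀ : Integrable (fun x => p x * log (p x / p₀ x)) μ)
    (hint₁ : Integrable (fun x => p x * log (p x / p₁ x)) μ) :
    ρ * ∫ x, pstar x * log (pstar x / p₀ x) ∂μ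
        + (1 - ρ) * ∫ x, pstar x * log (pstar x / p₁ x) ∂μ
      ≤ ρ * ∫ x, p x * log (p x / p₀ x) ∂μ
        + (1 - ρ) * ∫ x, p x * log (p x / p₁ x) ∂μ :=
  geometric_mixture_minimizes_KL_combination_general μ ρ p₀ p₁ hp₀ hp₁ Z hZpos hZ pstar hpstar
    hstarint₀ hstarint₁ p hp hpnorm hint₀ hint₁
end

section
/- Two-slice equivalence of power priors: if p(β₁|β₀) is the Dirac delta δ(β₁-β₀) and β₀ has prior p, then p(β₁|x₀,x₁,ρ) ∝ p(x₁|β₁)·p(x₀|β₁)^ρ·p(β₁), assuming the power prior transition p̂(β₁|x₀,ρ) ∝ p_δ(β₁|x₀)^ρ p(β₁)^{1-ρ} with p_δ(β₁|x₀) ∝ p(x₀|β₁)p(β₁). -/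
/-! Since `p_δ = L₀ π / Z₀`, the powers `π^ρ` and `π^{1-ρ}` recombine to `π`, and the
normalizing constant survives only as the factor of proportionality `Z₀^{-ρ}`. -/

namespace Real

lemma rpow_mul_rpow_one_sub {x : ℝ} (hx : 0 ≤ x) (y : ℝ) : x ^ y * x ^ (1 - y) = x := by
  rw [← rpow_add' hx (by norm_num), add_sub_cancel, rpow_one]

lemma mul_div_rpow_mul_rpow_one_sub {a b c : ℝ} (ha : 0 ≤ a) (hb : 0 ≤ b) (hc : 0 ≤ c)
    (ρ : ℝ) : (a * b / c) ^ ρ * b ^ (1 - ρ) = c ^ (-ρ) * (a ^ ρ * b) := by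
  calc (a * b / c) ^ ρ * b ^ (1 - ρ) = c ^ (-ρ) * a ^ ρ * (b ^ ρ * b ^ (1 - ρ)) := by
        rw [div_rpow (mul_nonneg ha hb) hc, mul_rpow ha hb, rpow_neg hc]
        ring
    _ = c ^ (-ρ) * (a ^ ρ * b) := by rw [rpow_mul_rpow_one_sub hb, mul_assoc]

end Real

theorem two_slice_power_prior_equivalence_general {B : Type*}
    (L₀ L₁ π : B → ℝ) (hL₀ : ∀ β, 0 ≤ L₀ β) (hπ : ∀ β, 0 ≤ π β)
    (ρ : ℝ)
    (Z₀ : ℝ) (hZpos : 0 < Z₀)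
    (pδ : B → ℝ) (hpδ : ∀ β, pδ β = L₀ β * π β / Z₀) :
    ∃ c > (0 : ℝ), ∀ β, L₁ β * (pδ β ^ ρ * π β ^ (1 - ρ))
      = c * (L₁ β * L₀ β ^ ρ * π β) := by
  refine ⟨Z₀ ^ (-ρ), Real.rpow_pos_of_pos hZpos _, fun β => ?_⟩
  rw [hpδ, Real.mul_div_rpow_mul_rpow_one_sub (hL₀ β) (hπ β) hZpos.le]
  ring

/-- Two-slice equivalence of power priors (finite parameter space): with
likelihoods `L₀ β = p(x₀|β)`, `L₁ β = p(x₁|β)`, prior `π`, posterior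
`p_δ(β|x₀) = L₀ β · π β / Z₀`, the power-prior update
`L₁ β · p_δ(β)^ρ · π(β)^{1-ρ}` is proportional to the Ibrahim–Chen power-prior
posterior `L₁ β · L₀(β)^ρ · π β`. -/
theorem two_slice_power_prior_equivalence {B : Type*} [Fintype B]
    (L₀ L₁ π : B → ℝ) (hL₀ : ∀ β, 0 ≤ L₀ β) (hπ : ∀ β, 0 ≤ π β)
    (ρ : ℝ) (hρ0 : 0 ≤ ρ) (hρ1 : ρ ≤ 1)
    (Z₀ : ℝ) (hZ₀ : Z₀ = ∑ β, L₀ β * π β) (hZpos : 0 < Z₀)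
    (pδ : B → ℝ) (hpδ : ∀ β, pδ β = L₀ β * π β / Z₀) :
    ∃ c > (0 : ℝ), ∀ β, L₁ β * (pδ β ^ ρ * π β ^ (1 - ρ))
      = c * (L₁ β * L₀ β ^ ρ * π β) :=
  two_slice_power_prior_equivalence_general L₀ L₁ π hL₀ hπ ρ Z₀ hZpos pδ hpδ
end
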